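/- arXiv:2502.08386 — 2 statements merged into one kernel-verified Lean document; each statement's English description precedes it below -/
import Mathlib

section
/- Non-wastefulness of ST-M2M matching (Lemma 8): Suppose the matching ν_t produced by the ST-M2M algorithm is knapsack-optimal. Then ν_t admits no type-2 blocking coalition (w, 𝕊') in which, for each task s ∈ 𝕊', the worker w belongs to the proposer set Ṽ(s) and the enlarged set ν_t(s) ∪ {w} is budget-feasible for s; that is, the matching is non-wasteful. -/
/-!
Non-wastefulness of ST-M2M matching (Lemma 8).

Spot-trading setting at timeslot `t`: finite task set `S'` (tasks with
remaining budget), finite worker set `W'` (available workers), matching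
`νS`/`νW` with `w ∈ νS s ↔ s ∈ νW w`, proposer sets `V s ⊇ νS s`, remaining
budgets `Bt s > 0`, payments `pS s w ≥ 0`, costs `c s w ≥ 0`, and
knapsack-optimality: `νS s` is a budget-feasible subset of `V s` maximizing
the utility `US s` over budget-feasible subsets of `V s`.

Conclusion: there is no type-2 blocking coalition `(w, 𝕊')` in which, for
each task `s ∈ 𝕊'`, the worker `w` belongs to the proposer set `V s` and the
enlarged set `νS s ∪ {w}` is budget-feasible for `s` and yields strictly
larger utility, while the worker strictly prefers `𝕊'` to `νW w`.  That is,
the matching is non-wasteful.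
-/
theorem stm2m_nonwastefulness
    {S' W' : Type*} [Fintype S'] [Fintype W'] [DecidableEq S'] [DecidableEq W']
    (νS : S' → Finset W') (νW : W' → Finset S')
    (hmatch : ∀ s w, w ∈ νS s ↔ s ∈ νW w)
    (Bt : S' → ℝ) (hBt : ∀ s, 0 < Bt s)
    (US : S' → Finset W' → ℝ) (UW : W' → Finset S' → ℝ)
    (pS : S' → W' → ℝ) (hpS : ∀ s w, 0 ≤ pS s w)
    (c : S' → W' → ℝ) (hc : ∀ s w, 0 ≤ c s w)
    (V : S' → Finset W') (hνV : ∀ s, νS s ⊆ V s)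
    (hbudget : ∀ s, ∑ w ∈ νS s, pS s w ≤ Bt s)
    (hopt : ∀ s, ∀ A ⊆ V s, ∑ w ∈ A, pS s w ≤ Bt s → US s A ≤ US s (νS s)) :
    ¬ ∃ (w : W') (𝕊' : Finset S'), 𝕊'.Nonempty ∧
        UW w (νW w) < UW w 𝕊' ∧
        ∀ s ∈ 𝕊', w ∈ V s ∧
          (∑ v ∈ insert w (νS s), pS s v ≤ Bt s) ∧
          US s (νS s) < US s (insert w (νS s)) := by
  rintro ⟨w, 𝕊', ⟨s, hs⟩, _, hall⟩
  obtain ⟨hwV, hb, hlt⟩ := hall s hs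
  exact absurd (hopt s _ (Finset.insert_subset hwV (hνV s)) hb) (not_le_of_gt hlt)
end

section
/- Strong stability of ST-M2M matching (Theorem 4): Suppose the matching ν_t produced by the ST-M2M algorithm is knapsack-optimal and that every worker w only proposes to tasks s for which R^{W'}_1(w, s) ≤ ρ₄ and R^{W'}_2(w, s) ≤ ρ₅. Then ν_t is strongly stable: it is individually rational (remaining budgets respected and workers' risk constraints satisfied), fair (no type-1 blocking coalition whose alternative sets consist of proposers and are budget-feasible), and non-wasteful (no type-2 blocking coalition whose enlarged sets consist of proposers and are budget-feasible). -/
/-!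
Strong stability of ST-M2M matching (Theorem 4).

Spot-trading setting at timeslot `t`: finite task set `S'` (tasks with
remaining budget), finite worker set `W'` (available workers), matching
`νS`/`νW` with `w ∈ νS s ↔ s ∈ νW w`, proposer sets `V s ⊇ νS s`, remaining
budgets `Bt s > 0`, payments `pS s w ≥ 0`, costs `c s w ≥ 0`, and
knapsack-optimality.  Each worker only proposes to tasks at which its risks
satisfy `RW1 w s ≤ ρ₄` and `RW2 w s ≤ ρ₅`.

Conclusion: the matching is strongly stable, i.e. individually rational
(remaining budgets respected and the workers' risk constraints satisfied
along the matching), fair (no type-1 blocking coalition whose alternative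
sets consist of proposers and are budget-feasible), and non-wasteful (no
type-2 blocking coalition whose enlarged sets consist of proposers and are
budget-feasible).
-/
theorem stm2m_strong_stability
    {S' W' : Type*} [Fintype S'] [Fintype W'] [DecidableEq S'] [DecidableEq W']
    (νS : S' → Finset W') (νW : W' → Finset S')
    (hmatch : ∀ s w, w ∈ νS s ↔ s ∈ νW w)
    (Bt : S' → ℝ) (hBt : ∀ s, 0 < Bt s)
    (US : S' → Finset W' → ℝ) (UW : W' → Finset S' → ℝ)
    (pS : S' → W' → ℝ) (hpS : ∀ s w, 0 ≤ pS s w)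
    (c : S' → W' → ℝ) (hc : ∀ s w, 0 ≤ c s w)
    (V : S' → Finset W') (hνV : ∀ s, νS s ⊆ V s)
    -- knapsack optimality of the matching
    (hbudget : ∀ s, ∑ w ∈ νS s, pS s w ≤ Bt s)
    (hopt : ∀ s, ∀ A ⊆ V s, ∑ w ∈ A, pS s w ≤ Bt s → US s A ≤ US s (νS s))
    -- risk functions and thresholds
    (RW1 RW2 : W' → S' → ℝ)
    (hRW1_01 : ∀ w s, RW1 w s ∈ Set.Icc (0 : ℝ) 1)
    (hRW2_01 : ∀ w s, RW2 w s ∈ Set.Icc (0 : ℝ) 1)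
    (ρ₄ ρ₅ : ℝ)
    (hρ₄ : ρ₄ ∈ Set.Ioc (0 : ℝ) 1) (hρ₅ : ρ₅ ∈ Set.Ioc (0 : ℝ) 1)
    (hpropose : ∀ s, ∀ w ∈ V s, RW1 w s ≤ ρ₄ ∧ RW2 w s ≤ ρ₅) :
    -- individual rationality
    ((∀ s, ∑ w ∈ νS s, pS s w ≤ Bt s) ∧
     (∀ w, ∀ s ∈ νW w, RW1 w s ≤ ρ₄) ∧
     (∀ w, ∀ s ∈ νW w, RW2 w s ≤ ρ₅)) ∧
    -- fairness: no type-1 blocking coalition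
    (¬ ∃ (w : W') (𝕊' : Finset S'), 𝕊'.Nonempty ∧
        UW w (νW w) < UW w 𝕊' ∧
        ∀ s ∈ 𝕊', w ∈ V s ∧
          ∃ ν' ⊆ νS s,
            (∑ v ∈ (νS s \ ν') ∪ {w}, pS s v ≤ Bt s) ∧
            US s (νS s) < US s ((νS s \ ν') ∪ {w})) ∧
    -- non-wastefulness: no type-2 blocking coalition
    (¬ ∃ (w : W') (𝕊' : Finset S'), 𝕊'.Nonempty ∧
        UW w (νW w) < UW w 𝕊' ∧
        ∀ s ∈ 𝕊', w ∈ V s ∧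
          (∑ v ∈ insert w (νS s), pS s v ≤ Bt s) ∧
          US s (νS s) < US s (insert w (νS s))) := by
  refine ⟨⟨hbudget, ?_, ?_⟩, ?_, ?_⟩
  · intro w s hs
    exact (hpropose s w (hνV s ((hmatch s w).2 hs))).1
  · intro w s hs
    exact (hpropose s w (hνV s ((hmatch s w).2 hs))).2
  · rintro ⟨w, 𝕊', ⟨s, hs⟩, _, hblk⟩
    obtain ⟨hwV, ν', hν', hfeas, hlt⟩ := hblk s hs
    have hsub : (νS s \ ν') ∪ {w} ⊆ V s := by
      intro v hv
      rcases Finset.mem_union.1 hv with h | h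
      · exact hνV s (Finset.mem_sdiff.1 h).1
      · simpa using (Finset.mem_singleton.1 h) ▸ hwV
    exact absurd (hopt s _ hsub hfeas) (not_le.2 hlt)
  · rintro ⟨w, 𝕊', ⟨s, hs⟩, _, hblk⟩
    obtain ⟨hwV, hfeas, hlt⟩ := hblk s hs
    have hsub : insert w (νS s) ⊆ V s := by
      intro v hv
      rcases Finset.mem_insert.1 hv with h | h
      · exact h ▸ hwV
      · exact hνV s h
    exact absurd (hopt s _ hsub hfeas) (not_le.2 hlt)
end
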